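/- arXiv:1508.00890 — 2 statements merged into one kernel-verified Lean document; each statement's English description precedes it below -/
import Mathlib

section
/- If u is smooth on (0,∞) with |u|_{1,α} < ∞ (where |u|²_{1,α} = ∫₀^∞ x^{−2α}(u² + (Du)²) dx/x, D = x d/dx), then u(x) = o(x^α) as x ↓ 0. -/
open Set Asymptotics MeasureTheory Filter

/-- If `u` is smooth on `(0,∞)` with
`|u|²_{1,α} = ∫₀^∞ x^{−2α}(u² + (Du)²) dx/x < ∞`, where `D = x d/dx`, then
`u(x) = o(x^α)` as `x ↓ 0`. -/
theorem stmt_7 (u : ℝ → ℝ) (α : ℝ) (hu : ContDiffOn ℝ (⊤ : ℕ∞) u (Ioi 0))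
    (hfin : IntegrableOn
      (fun x : ℝ => x ^ (-(2 * α)) * ((u x) ^ 2 + (x * deriv u x) ^ 2) / x)
      (Ioi 0)) :
    u =o[nhdsWithin 0 (Ioi 0)] fun x : ℝ => x ^ α := by
  have hC : ContinuousOn (deriv u) (Ioi 0) :=
    (hu.deriv_of_isOpen (m := (⊤ : ℕ∞)) isOpen_Ioi (by simp)).continuousOn
  have hCu : ContinuousOn u (Ioi 0) := hu.continuousOn
  set F : ℝ → ℝ := fun x => x ^ (-(2 * α)) * ((u x) ^ 2 + (x * deriv u x) ^ 2) / x with hF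
  set g : ℝ → ℝ := fun x => (u x) ^ 2 * x ^ (-(2 * α)) with hg
  set g' : ℝ → ℝ := fun x =>
    2 * u x * deriv u x * x ^ (-(2 * α)) + (u x) ^ 2 * (-(2 * α)) * x ^ (-(2 * α) - 1) with hg'
  -- derivative
  have hd : ∀ x ∈ Ioi (0 : ℝ), HasDerivAt g (g' x) x := by
    intro x hx
    have hx0 : (0 : ℝ) < x := hx
    have hdu : HasDerivAt u (deriv u x) x :=
      ((hu.contDiffAt (isOpen_Ioi.mem_nhds hx)).differentiableAt (by simp)).hasDerivAt
    have h1 : HasDerivAt (fun x => (u x) ^ 2) (2 * u x * deriv u x) x := by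
      have := hdu.fun_pow 2
      simpa [mul_comm, mul_assoc, mul_left_comm] using this
    have h2 : HasDerivAt (fun x : ℝ => x ^ (-(2 * α))) (-(2 * α) * x ^ (-(2 * α) - 1)) x :=
      Real.hasDerivAt_rpow_const (Or.inl hx0.ne')
    have := h1.fun_mul h2
    refine this.congr_deriv ?_
    rw [hg']
    ring
  -- pointwise bound
  have hbound : ∀ x ∈ Ioi (0 : ℝ), |g' x| ≤ (1 + 2 * |α|) * F x := by
    intro x hx
    have hx0 : (0 : ℝ) < x := hx
    set c : ℝ := x ^ (-(2 * α) - 1) with hc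
    have hcpos : 0 < c := Real.rpow_pos_of_pos hx0 _
    have hcx : x ^ (-(2 * α)) = c * x := by
      rw [hc, ← Real.rpow_add_one hx0.ne']
      norm_num
    set s : ℝ := 2 * u x * (x * deriv u x) + (-(2 * α)) * (u x) ^ 2 with hs
    set q : ℝ := (u x) ^ 2 + (x * deriv u x) ^ 2 with hq
    have hgs : g' x = c * s := by
      simp only [hg', hcx]
      ring
    have hFq : F x = c * q := by
      simp only [hF, hcx]
      field_simp
      ring
    have h1 : |2 * u x * (x * deriv u x)| ≤ q := by
      rw [abs_le]
      constructor
      · nlinarith [sq_nonneg (u x + x * deriv u x)]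
      · nlinarith [sq_nonneg (u x - x * deriv u x)]
    have h2 : |(-(2 * α)) * (u x) ^ 2| ≤ 2 * |α| * (u x) ^ 2 := by
      have : |(-(2 * α)) * (u x) ^ 2| = 2 * |α| * (u x) ^ 2 := by
        rw [abs_mul, abs_neg, abs_mul, abs_two, abs_of_nonneg (sq_nonneg (u x))]
      exact this.le
    have hq0 : 0 ≤ q := by positivity
    have hu2q : (u x) ^ 2 ≤ q := by nlinarith [sq_nonneg (x * deriv u x)]
    have habs : |s| ≤ (1 + 2 * |α|) * q := by
      calc |s| ≤ |2 * u x * (x * deriv u x)| + |(-(2 * α)) * (u x) ^ 2| := abs_add_le _ _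
        _ ≤ q + 2 * |α| * (u x) ^ 2 := add_le_add h1 h2
        _ ≤ (1 + 2 * |α|) * q := by nlinarith [abs_nonneg α]
    calc |g' x| = c * |s| := by rw [hgs, abs_mul, abs_of_pos hcpos]
      _ ≤ c * ((1 + 2 * |α|) * q) := by
          exact mul_le_mul_of_nonneg_left habs hcpos.le
      _ = (1 + 2 * |α|) * F x := by rw [hFq]; ring
  have hFint : IntegrableOn F (Ioc 0 1) := hfin.mono_set Ioc_subset_Ioi_self
  -- measurability of g'
  have hg'cont : ContinuousOn g' (Ioi 0) := by
    have hr : ∀ (p : ℝ), ContinuousOn (fun x : ℝ => x ^ p) (Ioi 0) := fun p x hx =>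
      (Real.continuousAt_rpow_const x p (Or.inl (ne_of_gt hx))).continuousWithinAt
    exact (((continuousOn_const.mul hCu).mul hC).mul (hr _)).add
      (((hCu.pow 2).mul continuousOn_const).mul (hr _))
  have hg'int : IntegrableOn g' (Ioc 0 1) := by
    apply Integrable.mono' (hFint.const_mul (1 + 2 * |α|))
    · exact (hg'cont.mono Ioc_subset_Ioi_self).aestronglyMeasurable measurableSet_Ioc
    · filter_upwards [ae_restrict_mem measurableSet_Ioc] with x hx
      simpa using hbound x hx.1
  have habs_int : IntegrableOn (fun x => |g' x|) (Ioc 0 1) := hg'int.abs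
  -- absolute continuity
  have hAC : ∀ ε > (0 : ℝ), ∃ δ, 0 < δ ∧ δ ≤ 1 ∧ (∫ x in Ioc (0 : ℝ) δ, |g' x|) < ε := by
    intro ε hε
    have hμ : Tendsto ((volume.restrict (Ioc (0 : ℝ) 1)) ∘ fun δ : ℝ => Ioc (0 : ℝ) δ)
        (nhdsWithin 0 (Ioi 0)) (nhds 0) := by
      have h1 : ∀ δ : ℝ, (volume.restrict (Ioc (0 : ℝ) 1)) (Ioc 0 δ) ≤ ENNReal.ofReal δ := by
        intro δ
        rw [Measure.restrict_apply measurableSet_Ioc]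
        calc volume (Ioc (0:ℝ) δ ∩ Ioc 0 1) ≤ volume (Ioc (0:ℝ) δ) :=
              measure_mono inter_subset_left
          _ = ENNReal.ofReal δ := by rw [Real.volume_Ioc]; norm_num
      have h2 : Tendsto (fun δ : ℝ => ENNReal.ofReal δ) (nhdsWithin 0 (Ioi 0)) (nhds 0) := by
        have := (ENNReal.continuous_ofReal.tendsto 0).mono_left
          (nhdsWithin_le_nhds (s := Ioi (0:ℝ)))
        simpa using this
      exact tendsto_of_tendsto_of_tendsto_of_le_of_le tendsto_const_nhds h2
        (fun δ => zero_le) h1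
    have ht := habs_int.tendsto_setIntegral_nhds_zero hμ
    have hev := ht.eventually (gt_mem_nhds hε)
    have hIoo : Ioo (0 : ℝ) 1 ∈ nhdsWithin (0 : ℝ) (Ioi 0) :=
      Ioo_mem_nhdsGT_of_mem ⟨le_refl 0, zero_lt_one⟩
    obtain ⟨δ, h1, h2⟩ := (hev.and (eventually_of_mem hIoo fun x hx => hx)).exists
    refine ⟨δ, h2.1, h2.2.le, ?_⟩
    have : (∫ x in Ioc (0 : ℝ) δ, |g' x| ∂(volume.restrict (Ioc (0 : ℝ) 1)))
        = ∫ x in Ioc (0 : ℝ) δ, |g' x| := by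
      rw [Measure.restrict_restrict measurableSet_Ioc,
        inter_eq_self_of_subset_left (Ioc_subset_Ioc_right h2.2.le)]
    rw [← this]
    exact h1
  -- key estimate
  have key : ∀ ε > (0 : ℝ), ∀ᶠ x in nhdsWithin (0 : ℝ) (Ioi 0), g x ≤ ε := by
    intro ε hε
    obtain ⟨δ, hδ0, hδ1, hδε⟩ := hAC (ε / 2) (by positivity)
    have hy : ∃ y ∈ Ioc (0 : ℝ) δ, g y < ε / 2 := by
      by_contra h
      push_neg at h
      have hint : IntegrableOn (fun x : ℝ => ε / 2 * x⁻¹) (Ioc 0 δ) := by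
        apply Integrable.mono' (hfin.mono_set Ioc_subset_Ioi_self)
        · exact (measurable_const.mul measurable_inv).aestronglyMeasurable
        · filter_upwards [ae_restrict_mem measurableSet_Ioc] with x hx
          have hx0 : (0 : ℝ) < x := hx.1
          have h2 := h x hx
          have hstep : ε / 2 * x⁻¹ ≤ g x * x⁻¹ :=
            mul_le_mul_of_nonneg_right h2 (inv_nonneg.2 hx0.le)
          have hstep2 : g x * x⁻¹ ≤ F x := by
            simp only [hg, hF, div_eq_mul_inv]
            have hr : (0:ℝ) ≤ x ^ (-(2*α)) := (Real.rpow_pos_of_pos hx0 _).le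
            have : (u x) ^ 2 * x ^ (-(2*α)) ≤ x ^ (-(2*α)) * ((u x)^2 + (x * deriv u x)^2) := by
              nlinarith [sq_nonneg (x * deriv u x), sq_nonneg (u x)]
            exact mul_le_mul_of_nonneg_right this (inv_nonneg.2 hx0.le)
          have hpos : 0 ≤ ε / 2 * x⁻¹ := by positivity
          rw [Real.norm_eq_abs, abs_of_nonneg hpos]
          exact hstep.trans hstep2
      have hinv : IntegrableOn (fun x : ℝ => x⁻¹) (Ioo 0 δ) := by
        have h2 := hint.const_mul (2 / ε)
        have heq : (fun x : ℝ => 2 / ε * (ε / 2 * x⁻¹)) = fun x : ℝ => x⁻¹ := by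
          funext x
          have hε' : ε ≠ 0 := ne_of_gt hε
          by_cases hx : x = 0
          · simp [hx]
          · field_simp
        rw [heq] at h2
        exact IntegrableOn.mono_set h2 Ioo_subset_Ioc_self
      have hrpow : IntegrableOn (fun x : ℝ => x ^ (-1 : ℝ)) (Ioo 0 δ) := by
        apply hinv.congr_fun _ measurableSet_Ioo
        intro x hx
        simp [Real.rpow_neg_one]
      rw [intervalIntegral.integrableOn_Ioo_rpow_iff hδ0] at hrpow
      linarith
    obtain ⟨y, hy_mem, hy_lt⟩ := hy
    filter_upwards [Ioo_mem_nhdsGT_of_mem ⟨le_refl 0, hy_mem.1⟩] with x hx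
    have hx0 : (0 : ℝ) < x := hx.1
    have hxy : x ≤ y := hx.2.le
    have hsub : Ioc x y ⊆ Ioc (0 : ℝ) 1 := Ioc_subset_Ioc hx0.le (hy_mem.2.trans hδ1)
    have hftc : g y - g x = ∫ t in x..y, g' t := by
      apply (intervalIntegral.integral_eq_sub_of_hasDerivAt _ _).symm
      · intro t ht
        rw [uIcc_of_le hxy] at ht
        exact hd t (lt_of_lt_of_le hx0 ht.1)
      · rw [intervalIntegrable_iff_integrableOn_Ioc_of_le hxy]
        exact hg'int.mono_set hsub
    have h1 : |∫ t in x..y, g' t| ≤ ∫ t in Ioc x y, |g' t| := by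
      rw [← intervalIntegral.integral_of_le hxy]
      exact intervalIntegral.abs_integral_le_integral_abs hxy
    have h2 : (∫ t in Ioc x y, |g' t|) ≤ ∫ t in Ioc (0 : ℝ) δ, |g' t| := by
      apply setIntegral_mono_set (habs_int.mono_set (Ioc_subset_Ioc le_rfl hδ1))
      · filter_upwards with t using abs_nonneg _
      · exact HasSubset.Subset.eventuallyLE (Ioc_subset_Ioc hx0.le hy_mem.2)
    have := neg_abs_le (∫ t in x..y, g' t)
    linarith
  -- conclude
  rw [isLittleO_iff]
  intro c hc
  filter_upwards [key (c ^ 2) (by positivity), self_mem_nhdsWithin] with x hx1 hx2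
  have hx0 : (0 : ℝ) < x := hx2
  have hxα : (0 : ℝ) < x ^ α := Real.rpow_pos_of_pos hx0 α
  have h2 : (u x) ^ 2 ≤ (c * x ^ α) ^ 2 := by
    have hdiv : (u x) ^ 2 * x ^ (-(2 * α)) = (u x) ^ 2 / x ^ (2 * α) := by
      rw [Real.rpow_neg hx0.le, div_eq_mul_inv]
    rw [hg] at hx1
    simp only [hdiv] at hx1
    have h2α : (0 : ℝ) < x ^ (2 * α) := Real.rpow_pos_of_pos hx0 _
    have := (div_le_iff₀ h2α).1 hx1
    calc (u x) ^ 2 ≤ c ^ 2 * x ^ (2 * α) := this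
      _ = (c * x ^ α) ^ 2 := by
          rw [mul_pow, ← Real.rpow_natCast (x ^ α) 2, ← Real.rpow_mul hx0.le]
          norm_num [mul_comm]
  have h3 : |u x| ≤ |c * x ^ α| := by
    have h4 := Real.sqrt_le_sqrt h2
    rwa [Real.sqrt_sq_eq_abs, Real.sqrt_sq_eq_abs] at h4
  simp only [Real.norm_eq_abs]
  calc |u x| ≤ |c * x ^ α| := h3
    _ = c * |x ^ α| := by rw [abs_mul, abs_of_pos hc]
end

section
/- (Hardy-type inequality) Let w ∈ C^∞((0,∞)), γ, ϱ ∈ ℝ with γ ≠ ϱ, assume |w|_{1,ϱ} < ∞, and assume w(x) = o(x^ϱ) as x ↓ 0 if γ < ϱ, respectively w(x) = o(x^ϱ) as x ↑ ∞ if γ > ϱ. Then |w|_{1,ϱ} ≤ C(γ,ϱ)·|(D − γ)w|_ϱ for a constant C(γ,ϱ) depending only on γ and ϱ. -/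
open Set Asymptotics Filter MeasureTheory
open scoped Topology

/-- The scaling-invariant derivative `D = x d/dx`. -/
noncomputable def Dop (f : ℝ → ℝ) : ℝ → ℝ := fun x => x * deriv f x

/-- The squared weighted `L²` norm `|w|²_α = ∫₀^∞ x^{−2α} w(x)² dx/x`. -/
noncomputable def nSq (α : ℝ) (w : ℝ → ℝ) : ℝ :=
  ∫ x in Ioi (0 : ℝ), x ^ (-(2 * α)) * (w x) ^ 2 / x

private lemma hardy_small_near_zero {P g : ℝ → ℝ} (hP : IntegrableOn P (Ioi 0))
    (hPg : ∀ x ∈ Ioi (0:ℝ), g x / x ≤ P x) :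
    ∀ δ : ℝ, 0 < δ → ∃ a, 0 < a ∧ a < δ ∧ g a < δ := by
  intro δ hδ
  by_contra hcon
  push_neg at hcon
  have hint : IntegrableOn (fun x : ℝ => x ^ (-1 : ℝ)) (Ioo (0:ℝ) δ) := by
    have hPδ : IntegrableOn (fun x => δ⁻¹ * P x) (Ioo 0 δ) :=
      (hP.mono_set (fun x hx => hx.1)).const_mul _
    refine hPδ.mono' ((ContinuousOn.rpow_const continuousOn_id
      (fun x hx => Or.inl (ne_of_gt hx.1))).aestronglyMeasurable measurableSet_Ioo) ?_
    filter_upwards [ae_restrict_mem measurableSet_Ioo] with x hx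
    have hx0 : (0:ℝ) < x := hx.1
    have h1 : δ / x ≤ g x / x := (div_le_div_iff_of_pos_right hx0).mpr (hcon x hx0 hx.2)
    have h2 : δ / x ≤ P x := h1.trans (hPg x hx0)
    have h3 : x ^ (-1 : ℝ) = x⁻¹ := Real.rpow_neg_one x
    rw [Real.norm_eq_abs, h3, abs_of_nonneg (inv_nonneg.mpr hx0.le)]
    calc x⁻¹ = δ⁻¹ * (δ / x) := by field_simp
    _ ≤ δ⁻¹ * P x := mul_le_mul_of_nonneg_left h2 (inv_nonneg.mpr hδ.le)
  rw [intervalIntegral.integrableOn_Ioo_rpow_iff hδ] at hint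
  linarith

private lemma hardy_small_at_top {P g : ℝ → ℝ} (hP : IntegrableOn P (Ioi 0))
    (hPg : ∀ x ∈ Ioi (0:ℝ), g x / x ≤ P x) :
    ∀ M : ℝ, 1 ≤ M → ∃ b, M < b ∧ g b < M⁻¹ := by
  intro M hM
  have hM0 : (0:ℝ) < M := lt_of_lt_of_le zero_lt_one hM
  by_contra hcon
  push_neg at hcon
  have hint : IntegrableOn (fun x : ℝ => x ^ (-1 : ℝ)) (Ioi M) := by
    have hPM : IntegrableOn (fun x => M * P x) (Ioi M) :=
      (hP.mono_set (fun x hx => lt_trans hM0 hx)).const_mul _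
    refine hPM.mono' ((ContinuousOn.rpow_const continuousOn_id
      (fun x hx => Or.inl (ne_of_gt (lt_trans hM0 hx)))).aestronglyMeasurable
      measurableSet_Ioi) ?_
    filter_upwards [ae_restrict_mem measurableSet_Ioi] with x hx
    have hx0 : (0:ℝ) < x := lt_trans hM0 hx
    have h1 : M⁻¹ / x ≤ g x / x := (div_le_div_iff_of_pos_right hx0).mpr (hcon x hx)
    have h2 : M⁻¹ / x ≤ P x := h1.trans (hPg x hx0)
    have h3 : x ^ (-1 : ℝ) = x⁻¹ := Real.rpow_neg_one x
    rw [Real.norm_eq_abs, h3, abs_of_nonneg (inv_nonneg.mpr hx0.le)]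
    have := mul_le_mul_of_nonneg_left h2 hM0.le
    calc x⁻¹ = M * (M⁻¹ / x) := by field_simp
    _ ≤ M * P x := this
  rw [integrableOn_Ioi_rpow_iff hM0] at hint
  linarith

/-- Key integration-by-parts identity: `∫₀^∞ x^{-2ϱ} w (Dw - ϱ w) dx/x = 0`. -/
private lemma hardy_key_integral (ϱ : ℝ) (w : ℝ → ℝ) (hw : ContDiffOn ℝ (⊤ : ℕ∞) w (Ioi 0))
    (h0 : IntegrableOn (fun x : ℝ => x ^ (-(2 * ϱ)) * (w x) ^ 2 / x) (Ioi 0))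
    (hq : IntegrableOn
      (fun x : ℝ => x ^ (-(2 * ϱ)) * (w x * (x * deriv w x - ϱ * w x)) / x) (Ioi 0)) :
    (∫ x in Ioi (0:ℝ), x ^ (-(2 * ϱ)) * (w x * (x * deriv w x - ϱ * w x)) / x) = 0 := by
  set q : ℝ → ℝ := fun x => x ^ (-(2 * ϱ)) * (w x * (x * deriv w x - ϱ * w x)) / x with hq_def
  set g : ℝ → ℝ := fun x => x ^ (-(2 * ϱ)) * (w x) ^ 2 with hg_def
  set G : ℝ → ℝ := fun x => x ^ (-(2 * ϱ)) * (w x) ^ 2 / 2 with hG_def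
  have hPg : ∀ x ∈ Ioi (0:ℝ), g x / x ≤ (fun x : ℝ => x ^ (-(2 * ϱ)) * (w x) ^ 2 / x) x :=
    fun x _ => le_refl _
  have claim0 := hardy_small_near_zero h0 hPg
  have claimT := hardy_small_at_top h0 hPg
  have ha' : ∀ n : ℕ, ∃ a, 0 < a ∧ a < 1 / ((n:ℝ) + 1) ∧ g a < 1 / ((n:ℝ) + 1) :=
    fun n => claim0 _ (by positivity)
  choose a ha1 ha2 ha3 using ha'
  have hb' : ∀ n : ℕ, ∃ b, ((n:ℝ) + 1) < b ∧ g b < ((n:ℝ) + 1)⁻¹ := by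
    intro n
    refine claimT _ ?_
    have : (0:ℝ) ≤ (n:ℝ) := Nat.cast_nonneg n
    linarith
  choose b hb1 hb2 using hb'
  have hb0 : ∀ n, (1:ℝ) ≤ b n := by
    intro n
    have : (0:ℝ) ≤ (n:ℝ) := Nat.cast_nonneg n
    linarith [hb1 n]
  have hab : ∀ n, a n ≤ b n := by
    intro n
    have h1 : 1 / ((n:ℝ) + 1) ≤ 1 := by
      rw [div_le_one (by positivity)]
      linarith [Nat.cast_nonneg (α := ℝ) n]
    linarith [ha2 n, hb0 n]
  -- the sets `Ioc (a n) (b n)` form an a.e. cover of `Ioi 0`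
  have ha_lim : Tendsto a atTop (𝓝 0) := by
    apply squeeze_zero (fun n => (ha1 n).le) (fun n => (ha2 n).le)
    exact tendsto_one_div_add_atTop_nhds_zero_nat
  have hb_lim : Tendsto b atTop atTop := by
    apply tendsto_atTop_mono (fun n => (hb1 n).le)
    exact tendsto_atTop_add_const_right _ 1 tendsto_natCast_atTop_atTop
  have hcov : AECover (volume.restrict (Ioi (0:ℝ))) atTop (fun n => Ioc (a n) (b n)) := by
    constructor
    · filter_upwards [ae_restrict_mem measurableSet_Ioi] with x hx
      have h1 : ∀ᶠ n in atTop, a n < x := ha_lim.eventually_lt_const hx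
      have h2 : ∀ᶠ n in atTop, x ≤ b n := hb_lim.eventually_ge_atTop x
      filter_upwards [h1, h2] with n hn1 hn2
      exact ⟨hn1, hn2⟩
    · exact fun n => measurableSet_Ioc
  have T1 := hcov.integral_tendsto_of_countably_generated (f := q) hq
  -- rewrite the approximating integrals via FTC
  have hderivG : ∀ x ∈ Ioi (0:ℝ), HasDerivAt G (q x) x := by
    intro x hx
    have hx0 : (0:ℝ) < x := hx
    have hrpow : HasDerivAt (fun y : ℝ => y ^ (-(2 * ϱ)))
        ((-(2 * ϱ)) * x ^ (-(2 * ϱ) - 1)) x :=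
      Real.hasDerivAt_rpow_const (Or.inl hx0.ne')
    have hwdiff : HasDerivAt w (deriv w x) x := by
      have h1 : DifferentiableWithinAt ℝ w (Ioi 0) x :=
        (hw.differentiableOn (by simp)) x hx
      exact (h1.differentiableAt (Ioi_mem_nhds hx0)).hasDerivAt
    have hw2 : HasDerivAt (fun y => (w y) ^ 2) (2 * w x ^ 1 * deriv w x) x :=
      hwdiff.pow 2
    have hmul := (hrpow.mul hw2).div_const 2
    have hkey : x ^ (-(2 * ϱ) - 1) = x ^ (-(2 * ϱ)) / x := by
      rw [show -(2 * ϱ) - 1 = -(2 * ϱ) + (-1) by ring, Real.rpow_add hx0,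
        Real.rpow_neg_one, div_eq_mul_inv]
    refine hmul.congr_deriv ?_
    rw [hq_def]
    simp only [pow_one, hkey]
    field_simp
    ring
  have hFTC : ∀ n, (∫ x in Ioc (a n) (b n), q x) = G (b n) - G (a n) := by
    intro n
    have hsub : uIcc (a n) (b n) ⊆ Ioi (0:ℝ) := by
      rw [uIcc_of_le (hab n)]
      exact fun x hx => lt_of_lt_of_le (ha1 n) hx.1
    have hint : IntervalIntegrable q volume (a n) (b n) :=
      intervalIntegrable_iff.mpr (hq.mono_set (subset_trans uIoc_subset_uIcc hsub))
    rw [← intervalIntegral.integral_of_le (hab n)]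
    exact intervalIntegral.integral_eq_sub_of_hasDerivAt
      (fun x hx => hderivG x (hsub hx)) hint
  -- the boundary terms tend to zero
  have hGnonneg : ∀ x, 0 < x → 0 ≤ G x := by
    intro x hx
    rw [hG_def]
    have := Real.rpow_pos_of_pos hx (-(2 * ϱ))
    positivity
  have hGa : Tendsto (fun n => G (a n)) atTop (𝓝 0) := by
    apply squeeze_zero (fun n => hGnonneg _ (ha1 n)) (fun n => ?_)
      tendsto_one_div_add_atTop_nhds_zero_nat
    have : G (a n) ≤ g (a n) := by
      rw [hG_def, hg_def]
      have h := hGnonneg _ (ha1 n)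
      rw [hG_def] at h
      simp only
      linarith
    exact this.trans (ha3 n).le
  have hGb : Tendsto (fun n => G (b n)) atTop (𝓝 0) := by
    apply squeeze_zero (fun n => hGnonneg _ (zero_lt_one.trans_le (hb0 n))) (fun n => ?_) tendsto_one_div_add_atTop_nhds_zero_nat
    have hbpos : (0:ℝ) < b n := lt_of_lt_of_le zero_lt_one (hb0 n)
    have : G (b n) ≤ g (b n) := by
      have h := hGnonneg _ hbpos
      rw [hG_def] at h
      rw [hG_def, hg_def]
      simp only
      linarith
    refine this.trans ?_
    rw [one_div]
    exact (hb2 n).le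
  have T2 : Tendsto (fun n => G (b n) - G (a n)) atTop (𝓝 0) := by
    simpa using hGb.sub hGa
  -- identify limits
  have T1' : Tendsto (fun n => G (b n) - G (a n)) atTop (𝓝 (∫ x in Ioi (0:ℝ), q x)) := by
    refine T1.congr (fun n => ?_)
    rw [Measure.restrict_restrict measurableSet_Ioc]
    have hss : Ioc (a n) (b n) ∩ Ioi 0 = Ioc (a n) (b n) :=
      inter_eq_self_of_subset_left (fun x hx => lt_of_lt_of_le (ha1 n) hx.1.le)
    rw [hss]
    exact hFTC n
  exact tendsto_nhds_unique T1' T2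

private lemma hardy_weighted_le {x A B W : ℝ} (hx : 0 < x) (hW : 0 ≤ W) (h : A ≤ B) :
    W * A / x ≤ W * B / x :=
  (div_le_div_iff_of_pos_right hx).mpr (mul_le_mul_of_nonneg_left h hW)

private lemma hardy_weighted_abs_le {x A B W : ℝ} (hx : 0 < x) (hW : 0 < W) (h : |A| ≤ B) :
    |W * A / x| ≤ W * B / x := by
  rw [abs_div, abs_mul, abs_of_pos hW, abs_of_pos hx]
  exact (div_le_div_iff_of_pos_right hx).mpr (mul_le_mul_of_nonneg_left h hW.le)

set_option maxHeartbeats 1000000 in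
/-- Hardy-type inequality: for `γ ≠ ϱ` there is `C = C(γ,ϱ) > 0` such that for
every smooth `w` on `(0,∞)` with `|w|_{1,ϱ} < ∞` and `w(x) = o(x^ϱ)` as `x ↓ 0`
if `γ < ϱ`, respectively as `x ↑ ∞` if `γ > ϱ`, one has
`|w|²_{1,ϱ} ≤ C |(D − γ)w|²_ϱ`. -/
theorem stmt_8 (γ ϱ : ℝ) (hne : γ ≠ ϱ) :
    ∃ C : ℝ, 0 < C ∧
      ∀ w : ℝ → ℝ, ContDiffOn ℝ (⊤ : ℕ∞) w (Ioi 0) →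
        IntegrableOn (fun x : ℝ => x ^ (-(2 * ϱ)) * (w x) ^ 2 / x) (Ioi 0) →
        IntegrableOn (fun x : ℝ => x ^ (-(2 * ϱ)) * (Dop w x) ^ 2 / x) (Ioi 0) →
        (γ < ϱ → w =o[nhdsWithin 0 (Ioi 0)] fun x : ℝ => x ^ ϱ) →
        (γ > ϱ → w =o[atTop] fun x : ℝ => x ^ ϱ) →
        nSq ϱ w + nSq ϱ (Dop w) ≤ C * nSq ϱ (fun x => Dop w x - γ * w x) := by
  have hsub0 : (ϱ - γ) ≠ 0 := sub_ne_zero.mpr (Ne.symm hne)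
  have hc2 : (0:ℝ) < (γ - ϱ) ^ 2 := by
    have h := sub_ne_zero.mpr hne
    positivity
  refine ⟨2 + (1 + 2 * γ ^ 2) / (γ - ϱ) ^ 2, by positivity, ?_⟩
  intro w hw h0 h1 _ _
  simp only [nSq, Dop] at h1 ⊢
  set c : ℝ := |ϱ - γ| with hc_def
  have hc : 0 < c := abs_pos.mpr hsub0
  -- continuity facts
  have hcw : ContinuousOn w (Ioi 0) := hw.continuousOn
  have hcd : ContinuousOn (deriv w) (Ioi 0) :=
    (hw.deriv_of_isOpen (m := 0) isOpen_Ioi (by simp)).continuousOn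
  have hWc : ContinuousOn (fun x : ℝ => x ^ (-(2 * ϱ))) (Ioi 0) :=
    ContinuousOn.rpow_const continuousOn_id (fun x hx => Or.inl (ne_of_gt hx))
  have hcont_aux : ∀ F : ℝ → ℝ, ContinuousOn F (Ioi 0) →
      ContinuousOn (fun x : ℝ => x ^ (-(2 * ϱ)) * F x / x) (Ioi 0) :=
    fun F hF => (hWc.mul hF).div continuousOn_id (fun x hx => ne_of_gt hx)
  have hcB : ContinuousOn (fun x : ℝ => x * deriv w x) (Ioi 0) := continuousOn_id.mul hcd
  -- domination principle
  have hdom : ∀ f gbd : ℝ → ℝ, IntegrableOn gbd (Ioi 0) → ContinuousOn f (Ioi 0) →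
      (∀ x ∈ Ioi (0:ℝ), |f x| ≤ gbd x) → IntegrableOn f (Ioi 0) := by
    intro f gbd hg hf hle
    refine hg.mono' (hf.aestronglyMeasurable measurableSet_Ioi) ?_
    filter_upwards [ae_restrict_mem measurableSet_Ioi] with x hx
    simpa [Real.norm_eq_abs] using hle x hx
  -- integrability of the various integrands
  have hcPh : ContinuousOn
      (fun x : ℝ => x ^ (-(2 * ϱ)) * (x * deriv w x - γ * w x) ^ 2 / x) (Ioi 0) :=
    hcont_aux _ ((hcB.sub (continuousOn_const.mul hcw)).pow 2)
  have hbdPh : IntegrableOn (fun x : ℝ => 2 * (x ^ (-(2 * ϱ)) * (x * deriv w x) ^ 2 / x)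
        + 2 * γ ^ 2 * (x ^ (-(2 * ϱ)) * (w x) ^ 2 / x)) (Ioi 0) :=
    (h1.const_mul 2).add (h0.const_mul (2 * γ ^ 2))
  have hPh_int : IntegrableOn
      (fun x : ℝ => x ^ (-(2 * ϱ)) * (x * deriv w x - γ * w x) ^ 2 / x) (Ioi 0) := by
    refine hdom _ _ hbdPh hcPh ?_
    intro x hx
    have hx0 : (0:ℝ) < x := hx
    have hW : 0 < x ^ (-(2 * ϱ)) := Real.rpow_pos_of_pos hx0 _
    have e : 2 * (x ^ (-(2 * ϱ)) * (x * deriv w x) ^ 2 / x)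
        + 2 * γ ^ 2 * (x ^ (-(2 * ϱ)) * (w x) ^ 2 / x)
        = x ^ (-(2 * ϱ)) * (2 * (x * deriv w x) ^ 2 + 2 * γ ^ 2 * (w x) ^ 2) / x := by ring
    rw [e]
    refine hardy_weighted_abs_le hx0 hW ?_
    rw [abs_of_nonneg (sq_nonneg _)]
    nlinarith [sq_nonneg (x * deriv w x + γ * w x)]
  have hcq : ContinuousOn
      (fun x : ℝ => x ^ (-(2 * ϱ)) * (w x * (x * deriv w x - ϱ * w x)) / x) (Ioi 0) :=
    hcont_aux _ (hcw.mul (hcB.sub (continuousOn_const.mul hcw)))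
  have hbdq : IntegrableOn
      (fun x : ℝ => (1 + 2 * ϱ ^ 2) / 2 * (x ^ (-(2 * ϱ)) * (w x) ^ 2 / x)
        + x ^ (-(2 * ϱ)) * (x * deriv w x) ^ 2 / x) (Ioi 0) :=
    (h0.const_mul _).add h1
  have hq_int : IntegrableOn
      (fun x : ℝ => x ^ (-(2 * ϱ)) * (w x * (x * deriv w x - ϱ * w x)) / x) (Ioi 0) := by
    refine hdom _ _ hbdq hcq ?_
    intro x hx
    have hx0 : (0:ℝ) < x := hx
    have hW : 0 < x ^ (-(2 * ϱ)) := Real.rpow_pos_of_pos hx0 _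
    have e : (1 + 2 * ϱ ^ 2) / 2 * (x ^ (-(2 * ϱ)) * (w x) ^ 2 / x)
        + x ^ (-(2 * ϱ)) * (x * deriv w x) ^ 2 / x
        = x ^ (-(2 * ϱ)) * ((1 + 2 * ϱ ^ 2) / 2 * (w x) ^ 2 + (x * deriv w x) ^ 2) / x := by
      ring
    rw [e]
    refine hardy_weighted_abs_le hx0 hW ?_
    rw [abs_le]
    constructor
    · nlinarith [sq_nonneg (w x + (x * deriv w x - ϱ * w x)),
        sq_nonneg (x * deriv w x + ϱ * w x), sq_nonneg (x * deriv w x - ϱ * w x)]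
    · nlinarith [sq_nonneg (w x - (x * deriv w x - ϱ * w x)),
        sq_nonneg (x * deriv w x + ϱ * w x), sq_nonneg (x * deriv w x - ϱ * w x)]
  have hcqg : ContinuousOn
      (fun x : ℝ => x ^ (-(2 * ϱ)) * (w x * (x * deriv w x - γ * w x)) / x) (Ioi 0) :=
    hcont_aux _ (hcw.mul (hcB.sub (continuousOn_const.mul hcw)))
  have hbdqg : IntegrableOn
      (fun x : ℝ => (1 + 2 * γ ^ 2) / 2 * (x ^ (-(2 * ϱ)) * (w x) ^ 2 / x)
        + x ^ (-(2 * ϱ)) * (x * deriv w x) ^ 2 / x) (Ioi 0) :=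
    (h0.const_mul _).add h1
  have hqg_int : IntegrableOn
      (fun x : ℝ => x ^ (-(2 * ϱ)) * (w x * (x * deriv w x - γ * w x)) / x) (Ioi 0) := by
    refine hdom _ _ hbdqg hcqg ?_
    intro x hx
    have hx0 : (0:ℝ) < x := hx
    have hW : 0 < x ^ (-(2 * ϱ)) := Real.rpow_pos_of_pos hx0 _
    have e : (1 + 2 * γ ^ 2) / 2 * (x ^ (-(2 * ϱ)) * (w x) ^ 2 / x)
        + x ^ (-(2 * ϱ)) * (x * deriv w x) ^ 2 / x
        = x ^ (-(2 * ϱ)) * ((1 + 2 * γ ^ 2) / 2 * (w x) ^ 2 + (x * deriv w x) ^ 2) / x := by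
      ring
    rw [e]
    refine hardy_weighted_abs_le hx0 hW ?_
    rw [abs_le]
    constructor
    · nlinarith [sq_nonneg (w x + (x * deriv w x - γ * w x)),
        sq_nonneg (x * deriv w x + γ * w x), sq_nonneg (x * deriv w x - γ * w x)]
    · nlinarith [sq_nonneg (w x - (x * deriv w x - γ * w x)),
        sq_nonneg (x * deriv w x + γ * w x), sq_nonneg (x * deriv w x - γ * w x)]
  -- names for the three norms
  set N0 : ℝ := ∫ x in Ioi (0:ℝ), x ^ (-(2 * ϱ)) * (w x) ^ 2 / x with hN0_def
  set N1 : ℝ := ∫ x in Ioi (0:ℝ), x ^ (-(2 * ϱ)) * (x * deriv w x) ^ 2 / x with hN1_def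
  set Nh : ℝ := ∫ x in Ioi (0:ℝ), x ^ (-(2 * ϱ)) * (x * deriv w x - γ * w x) ^ 2 / x
    with hNh_def
  have hN0 : 0 ≤ N0 := by
    rw [hN0_def]
    refine setIntegral_nonneg measurableSet_Ioi (fun x hx => ?_)
    have hW : 0 < x ^ (-(2 * ϱ)) := Real.rpow_pos_of_pos hx _
    exact div_nonneg (mul_nonneg hW.le (sq_nonneg _)) (le_of_lt hx)
  have hNh : 0 ≤ Nh := by
    rw [hNh_def]
    refine setIntegral_nonneg measurableSet_Ioi (fun x hx => ?_)
    have hW : 0 < x ^ (-(2 * ϱ)) := Real.rpow_pos_of_pos hx _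
    exact div_nonneg (mul_nonneg hW.le (sq_nonneg _)) (le_of_lt hx)
  -- integration by parts identity
  have hkey := hardy_key_integral ϱ w hw h0 hq_int
  have hqeq : (fun x : ℝ => x ^ (-(2 * ϱ)) * (w x * (x * deriv w x - γ * w x)) / x)
      = fun x : ℝ => x ^ (-(2 * ϱ)) * (w x * (x * deriv w x - ϱ * w x)) / x
        + (ϱ - γ) * (x ^ (-(2 * ϱ)) * (w x) ^ 2 / x) := by
    funext x
    ring
  have I1 : (∫ x in Ioi (0:ℝ), x ^ (-(2 * ϱ)) * (w x * (x * deriv w x - γ * w x)) / x)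
      = (ϱ - γ) * N0 := by
    rw [hqeq, integral_add hq_int (h0.const_mul (ϱ - γ)), integral_const_mul _ _, hkey,
      zero_add, hN0_def]
  -- Cauchy–Schwarz (via AM–GM) step
  have habs : |(∫ x in Ioi (0:ℝ), x ^ (-(2 * ϱ)) * (w x * (x * deriv w x - γ * w x)) / x)|
      ≤ ∫ x in Ioi (0:ℝ), |x ^ (-(2 * ϱ)) * (w x * (x * deriv w x - γ * w x)) / x| := by
    have h := norm_integral_le_integral_norm
      (μ := volume.restrict (Ioi 0))
      (fun x : ℝ => x ^ (-(2 * ϱ)) * (w x * (x * deriv w x - γ * w x)) / x)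
    simp only [Real.norm_eq_abs] at h
    exact h
  have hmono2 : (∫ x in Ioi (0:ℝ),
        |x ^ (-(2 * ϱ)) * (w x * (x * deriv w x - γ * w x)) / x|)
      ≤ c / 2 * N0 + 1 / (2 * c) * Nh := by
    have hsum : (∫ x in Ioi (0:ℝ),
        (c / 2 * (x ^ (-(2 * ϱ)) * (w x) ^ 2 / x)
          + 1 / (2 * c) * (x ^ (-(2 * ϱ)) * (x * deriv w x - γ * w x) ^ 2 / x)))
        = c / 2 * N0 + 1 / (2 * c) * Nh := by
      rw [integral_add (h0.const_mul _) (hPh_int.const_mul _), integral_const_mul _ _,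
        integral_const_mul _ _, hN0_def, hNh_def]
    rw [← hsum]
    refine setIntegral_mono_on hqg_int.abs
      ((h0.const_mul _).add (hPh_int.const_mul _)) measurableSet_Ioi (fun x hx => ?_)
    have hx0 : (0:ℝ) < x := hx
    have hW : 0 < x ^ (-(2 * ϱ)) := Real.rpow_pos_of_pos hx0 _
    have e : c / 2 * (x ^ (-(2 * ϱ)) * (w x) ^ 2 / x)
        + 1 / (2 * c) * (x ^ (-(2 * ϱ)) * (x * deriv w x - γ * w x) ^ 2 / x)
        = x ^ (-(2 * ϱ)) * (c / 2 * (w x) ^ 2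
          + 1 / (2 * c) * (x * deriv w x - γ * w x) ^ 2) / x := by ring
    rw [e]
    refine hardy_weighted_abs_le hx0 hW ?_
    rw [abs_mul]
    have h2 : 2 * c * (|w x| * |x * deriv w x - γ * w x|)
        ≤ c ^ 2 * (w x) ^ 2 + (x * deriv w x - γ * w x) ^ 2 := by
      nlinarith [sq_nonneg (c * |w x| - |x * deriv w x - γ * w x|), sq_abs (w x),
        sq_abs (x * deriv w x - γ * w x)]
    have e2 : c / 2 * (w x) ^ 2 + 1 / (2 * c) * (x * deriv w x - γ * w x) ^ 2
        = (c ^ 2 * (w x) ^ 2 + (x * deriv w x - γ * w x) ^ 2) / (2 * c) := by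
      field_simp
    rw [e2, le_div_iff₀ (by positivity)]
    linarith
  have hCS : c ^ 2 * N0 ≤ Nh := by
    have h := habs
    rw [I1] at h
    have habs2 : |(ϱ - γ) * N0| = c * N0 := by
      rw [abs_mul, abs_of_nonneg hN0, hc_def]
    rw [habs2] at h
    have h3 := h.trans hmono2
    have h4 := mul_le_mul_of_nonneg_left h3 (le_of_lt (by positivity : (0:ℝ) < 2 * c))
    have e1 : 2 * c * (c * N0) = 2 * (c ^ 2 * N0) := by ring
    have e2 : 2 * c * (c / 2 * N0 + 1 / (2 * c) * Nh) = c ^ 2 * N0 + Nh := by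
      field_simp
    rw [e1, e2] at h4
    linarith
  -- bound on the derivative term
  have hI3 : N1 ≤ 2 * Nh + 2 * γ ^ 2 * N0 := by
    have hsum : (∫ x in Ioi (0:ℝ),
        (2 * (x ^ (-(2 * ϱ)) * (x * deriv w x - γ * w x) ^ 2 / x)
          + 2 * γ ^ 2 * (x ^ (-(2 * ϱ)) * (w x) ^ 2 / x)))
        = 2 * Nh + 2 * γ ^ 2 * N0 := by
      rw [integral_add (hPh_int.const_mul _) (h0.const_mul _), integral_const_mul _ _,
        integral_const_mul _ _, hN0_def, hNh_def]
    rw [hN1_def, ← hsum]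
    refine setIntegral_mono_on h1
      ((hPh_int.const_mul _).add (h0.const_mul _)) measurableSet_Ioi (fun x hx => ?_)
    have hx0 : (0:ℝ) < x := hx
    have hW : 0 < x ^ (-(2 * ϱ)) := Real.rpow_pos_of_pos hx0 _
    have e : 2 * (x ^ (-(2 * ϱ)) * (x * deriv w x - γ * w x) ^ 2 / x)
        + 2 * γ ^ 2 * (x ^ (-(2 * ϱ)) * (w x) ^ 2 / x)
        = x ^ (-(2 * ϱ)) * (2 * (x * deriv w x - γ * w x) ^ 2
          + 2 * γ ^ 2 * (w x) ^ 2) / x := by ring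
    rw [e]
    refine hardy_weighted_le hx0 hW.le ?_
    nlinarith [sq_nonneg (x * deriv w x - 2 * γ * w x)]
  -- conclusion
  have hcc : c ^ 2 = (γ - ϱ) ^ 2 := by
    rw [hc_def, sq_abs]
    ring
  have hkey2 : (1 + 2 * γ ^ 2) * N0 ≤ (1 + 2 * γ ^ 2) / (γ - ϱ) ^ 2 * Nh := by
    rw [div_mul_eq_mul_div, le_div_iff₀ hc2]
    have h5 : (γ - ϱ) ^ 2 * N0 ≤ Nh := by
      rw [← hcc]
      exact hCS
    nlinarith [h5]
  rw [add_mul]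
  nlinarith [hkey2, hI3, hN0, hNh]
end
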